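/- arXiv:1603.02100 — 2 statements merged into one kernel-verified Lean document; each statement's English description precedes it below -/
import Mathlib

section
/- The relations ≤₁ and ≤₂ are partial orderings of Ord (reflexive, antisymmetric and transitive); ≤₁ respects ≤ (that is, α ≤₁ β implies α ≤ β, and if α ≤ β ≤ γ and α ≤₁ γ then α ≤₁ β); and ≤₂ respects ≤₁ (that is, α ≤₂ β implies α ≤₁ β, and if α ≤₁ β ≤₁ γ and α ≤₂ γ then α ≤₂ β). -/
open Ordinal Set

/-- `ρ` is additively indecomposable: nonzero and closed under addition. -/
def AddIndec (ρ : Ordinal) : Prop :=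
  ρ ≠ 0 ∧ ∀ ξ < ρ, ∀ η < ρ, ξ + η < ρ

/-- `σ` is divisible by `ρ`, i.e. of the form `ρ·ζ`. -/
def DivBy (ρ σ : Ordinal) : Prop := ∃ ζ : Ordinal, σ = ρ * ζ

/-- The function `f_ξ` of the structure `R^ρ`. -/
noncomputable def fApp (ρ ξ α : Ordinal) : Ordinal :=
  if α % ρ = 0 then α + ξ else ρ * (α / ρ)

/-- A set of ordinals is closed (with respect to `R^ρ`). -/
def RClosed (ρ : Ordinal) (X : Set Ordinal) : Prop :=
  ∀ σ ξ : Ordinal, DivBy ρ σ → ξ < ρ → σ + ξ ∈ X → σ ∈ X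

/-- `h` is an embedding of `X` (as a substructure of `R^ρ`) into `R^ρ`. -/
def IsEmbed (ρ : Ordinal) (X : Set Ordinal) (h : Ordinal → Ordinal) : Prop :=
  (∀ α ∈ X, ∀ β ∈ X, α < β → h α < h β) ∧
  (∀ α ∈ X, ∀ β ∈ X, ∀ ξ, ξ < ρ → (fApp ρ ξ α = β ↔ fApp ρ ξ (h α) = h β))

/-- `Y` is a covering of `Z` (relative to relations `le1`, `le2`). -/
def IsCovering (ρ : Ordinal) (le1 le2 : Ordinal → Ordinal → Prop)
    (Z Y : Set Ordinal) : Prop :=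
  ∃ h : Ordinal → Ordinal, IsEmbed ρ Z h ∧
    (∀ σ ∈ Z, ∀ τ ∈ Z, (le1 σ τ → le1 (h σ) (h τ)) ∧ (le2 σ τ → le2 (h σ) (h τ))) ∧
    h '' Z = Y

/-- The `i`-th element of a finite set of ordinals, in increasing order. -/
noncomputable def nth (Y : Finset Ordinal) (i : ℕ) : Ordinal :=
  (Y.sort (· ≤ ·)).getD i 0

/-- There are cofinally many finite sets `Ỹ` below `α` with property `P`. -/
def Cofinally (α : Ordinal) (P : Finset Ordinal → Prop) : Prop :=
  ∀ α' < α, ∃ Yt : Finset Ordinal, (∀ y ∈ Yt, α' < y ∧ y < α) ∧ P Yt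

/-- The defining condition for `α ≤₁ β`. -/
def Le1Def (ρ : Ordinal) (le1 le2 : Ordinal → Ordinal → Prop) (α β : Ordinal) : Prop :=
  α ≤ β ∧
  ∀ X Y : Finset Ordinal, (∀ x ∈ X, x < α) → (∀ y ∈ Y, α ≤ y ∧ y < β) →
    RClosed ρ (↑(X ∪ Y) : Set Ordinal) →
    ∃ Yt : Finset Ordinal, (∀ y ∈ Yt, y < α) ∧ (∀ x ∈ X, ∀ y ∈ Yt, x < y) ∧
      IsCovering ρ le1 le2 (↑(X ∪ Y) : Set Ordinal) (↑(X ∪ Yt) : Set Ordinal)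

/-- The defining condition for `α ≤₂ β`. -/
def Le2Def (ρ : Ordinal) (le1 le2 : Ordinal → Ordinal → Prop) (α β : Ordinal) : Prop :=
  α ≤ β ∧
  (∀ X Y : Finset Ordinal, (∀ x ∈ X, x < α) → (∀ y ∈ Y, y < α) →
    RClosed ρ (↑X : Set Ordinal) → RClosed ρ (↑Y : Set Ordinal) →
    (∀ x ∈ X, ∀ y ∈ Y, x < y) →
    Cofinally α (fun Yt => IsCovering ρ le1 le2 (↑(X ∪ Y) : Set Ordinal) (↑(X ∪ Yt) : Set Ordinal)) →
    Cofinally β (fun Yt => IsCovering ρ le1 le2 (↑(X ∪ Y) : Set Ordinal) (↑(X ∪ Yt) : Set Ordinal))) ∧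
  (∀ X Y : Finset Ordinal, (∀ x ∈ X, x < α) → (∀ y ∈ Y, α ≤ y ∧ y < β) →
    RClosed ρ (↑(X ∪ Y) : Set Ordinal) →
    ∃ Yt : Finset Ordinal, (∀ y ∈ Yt, y < α) ∧ (∀ x ∈ X, ∀ y ∈ Yt, x < y) ∧
      IsCovering ρ le1 le2 (↑(X ∪ Y) : Set Ordinal) (↑(X ∪ Yt) : Set Ordinal) ∧
      ∀ i : ℕ, i < Y.card → le1 (nth Y i) β → le1 (nth Yt i) α)

/-- `le1`, `le2` satisfy the recursive definitions of `≤₁` and `≤₂` of `R₂^ρ`. -/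
def R2System (ρ : Ordinal) (le1 le2 : Ordinal → Ordinal → Prop) : Prop :=
  (∀ α β, le1 α β ↔ Le1Def ρ le1 le2 α β) ∧
  (∀ α β, le2 α β ↔ Le2Def ρ le1 le2 α β)

/-- Isomorphism of two classes of ordinals as substructures of `R₂^ρ`. -/
def OrdIso (ρ : Ordinal) (le1 le2 : Ordinal → Ordinal → Prop) (A B : Set Ordinal) : Prop :=
  ∃ g : Ordinal → Ordinal, Set.BijOn g A B ∧
    (∀ σ ∈ A, ∀ τ ∈ A, (σ < τ ↔ g σ < g τ)) ∧
    (∀ σ ∈ A, ∀ τ ∈ A, ∀ ξ, ξ < ρ → (fApp ρ ξ σ = τ ↔ fApp ρ ξ (g σ) = g τ)) ∧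
    (∀ σ ∈ A, ∀ τ ∈ A, (le1 σ τ ↔ le1 (g σ) (g τ)) ∧ (le2 σ τ ↔ le2 (g σ) (g τ)))

/-- `κ` is `≤₁`-minimal. -/
def Min1 (le1 : Ordinal → Ordinal → Prop) (κ : Ordinal) : Prop :=
  ∀ ξ < κ, ¬ le1 ξ κ

/-- `(dom, f)` is the increasing enumeration of the class `S` of ordinals:
`dom` is a downward-closed class of indices and `f` restricted to `dom` is the
order isomorphism onto `S`. -/
def Enumerates (S : Set Ordinal) (dom : Ordinal → Prop) (f : Ordinal → Ordinal) : Prop :=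
  (∀ a b : Ordinal, dom a → b < a → dom b) ∧
  (∀ a b : Ordinal, dom b → a < b → f a < f b) ∧
  (∀ a : Ordinal, dom a → f a ∈ S) ∧
  (∀ x ∈ S, ∃ a, dom a ∧ f a = x)

/-- `l` is a limit point of the class `C` of ordinals. -/
def LimPt (C : Set Ordinal) (l : Ordinal) : Prop :=
  l ≠ 0 ∧ ∀ γ < l, ∃ δ ∈ C, γ < δ ∧ δ < l

/-- The class `C` of ordinals is topologically closed. -/
def TopClosed (C : Set Ordinal) : Prop := ∀ l, LimPt C l → l ∈ C

/-- The class `C` of ordinals is an interval. -/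
def IsInterval (C : Set Ordinal) : Prop :=
  ∀ σ τ υ : Ordinal, σ ∈ C → υ ∈ C → σ ≤ τ → τ ≤ υ → τ ∈ C

open Classical in
/-- The closure `J̄_ξ` of the `ξ`-th component of `I_α` with respect to `≤₂`,
given the enumeration `(dom₂, ν)` of the `≤₂`-minimal multiples of `κ_α` in `I_α`. -/
noncomputable def Jbar (le1 : Ordinal → Ordinal → Prop) (κα : Ordinal)
    (dom₂ : Ordinal → Prop) (ν : Ordinal → Ordinal) (ξ : Ordinal) : Set Ordinal :=
  if dom₂ (ξ + 1) then Set.Icc (ν ξ) (ν (ξ + 1))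
  else {δ | le1 κα δ} ∩ Set.Ici (ν ξ)

/-! Reflexivity, antisymmetry, `≤₁ ⊆ ≤` and `≤₂ ⊆ ≤₁` are immediate from the definitions.
Transitivity rests on composing coverings: given `α ≤ₖ β ≤ₖ γ` and a configuration `X ∪ Y`
with `Y` below `γ`, first move `Y` below `β` using `β ≤ₖ γ`, then move what lies in `[α, β)`
below `α` using `α ≤ₖ β`. The composite of the two covering maps is a covering map; being
strictly increasing and onto `X ∪ Ỹ`, it fixes `X` and sends the `i`-th element of `Y` to the
`i`-th element of `Ỹ`, which is how the `≤₁`-clause of `≤₂` is carried along. That `≤₁` and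
`≤₂` respect `≤` resp. `≤₁` amounts to restricting `Y` to a shorter interval, except for the
cofinality clause of `≤₂`: a covering found cofinally below `γ` above some `δ < β` is pulled
below `β` by `β ≤₁ γ`. -/

section Closed

variable {ρ : Ordinal}

lemma mul_add_mod_of_lt {ξ : Ordinal} (hξ : ξ < ρ) (u : Ordinal) : (ρ * u + ξ) % ρ = ξ := by
  rw [Ordinal.mul_add_mod_self, Ordinal.mod_eq_of_lt hξ]

lemma mul_add_div_of_lt {ξ : Ordinal} (hξ : ξ < ρ) (u : Ordinal) : (ρ * u + ξ) / ρ = u := by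
  rw [Ordinal.mul_add_div _ (ne_bot_of_gt hξ), Ordinal.div_eq_zero_of_lt hξ, add_zero]

lemma fApp_zero_eq_self_iff (α : Ordinal) : fApp ρ 0 α = α ↔ α % ρ = 0 := by
  unfold fApp
  split_ifs with h
  · simp [h]
  · refine iff_of_false (fun hα => h ?_) h
    have := Ordinal.div_add_mod α ρ
    rwa [hα, add_eq_left] at this

lemma IsEmbed.mod_eq_zero_iff {Z : Set Ordinal} {h : Ordinal → Ordinal} (hρ : ρ ≠ 0)
    (emb : IsEmbed ρ Z h) {α : Ordinal} (hα : α ∈ Z) : h α % ρ = 0 ↔ α % ρ = 0 := by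
  rw [← fApp_zero_eq_self_iff, ← fApp_zero_eq_self_iff]
  exact (emb.2 α hα α hα 0 (pos_iff_ne_zero.2 hρ)).symm

lemma RClosed.union {S T : Set Ordinal} (hS : RClosed ρ S) (hT : RClosed ρ T) :
    RClosed ρ (S ∪ T) := by
  rintro σ ξ hσ hξ (hin | hin)
  · exact Or.inl (hS σ ξ hσ hξ hin)
  · exact Or.inr (hT σ ξ hσ hξ hin)

lemma rclosed_pair (δ : Ordinal) : RClosed ρ {ρ * (δ / ρ), δ} := by
  rintro _ ξ ⟨u, rfl⟩ hξ hin
  left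
  have hρ : ρ ≠ 0 := ne_bot_of_gt hξ
  rcases hin with hin | hin
  · have := congrArg (· / ρ) hin
    simp only [mul_add_div_of_lt hξ, Ordinal.mul_div_cancel _ hρ] at this
    rw [this]
  · rw [← hin, mul_add_div_of_lt hξ]

/-- If `h α = ρ·u + ξ` with `0 < ξ`, then `ρ·u = f_0 (h α) = h (f_0 α)`. -/
lemma RClosed.image {Z : Set Ordinal} {h : Ordinal → Ordinal} (hZ : RClosed ρ Z)
    (emb : IsEmbed ρ Z h) : RClosed ρ (h '' Z) := by
  rintro _ ξ ⟨u, rfl⟩ hξ ⟨α, hα, hαu⟩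
  rcases eq_or_ne ξ 0 with rfl | hξ0
  · rw [add_zero] at hαu
    exact ⟨α, hα, hαu⟩
  have hρ : ρ ≠ 0 := ne_bot_of_gt hξ
  have hhα : h α % ρ ≠ 0 := by rwa [hαu, mul_add_mod_of_lt hξ]
  have hα0 : α % ρ ≠ 0 := mt (emb.mod_eq_zero_iff hρ hα).2 hhα
  have hβ : ρ * (α / ρ) ∈ Z :=
    hZ _ (α % ρ) ⟨_, rfl⟩ (Ordinal.mod_lt α hρ) (by rwa [Ordinal.div_add_mod])
  refine ⟨ρ * (α / ρ), hβ, ?_⟩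
  have := (emb.2 α hα _ hβ 0 (pos_iff_ne_zero.2 hρ)).1 (by simp [fApp, hα0])
  rw [fApp, if_neg hhα, hαu, mul_add_div_of_lt hξ] at this
  exact this.symm

end Closed

section CoveringMap

variable {ρ : Ordinal} {le1 le2 : Ordinal → Ordinal → Prop}

structure IsCoveringEmbed (ρ : Ordinal) (le1 le2 : Ordinal → Ordinal → Prop) (Z : Set Ordinal)
    (h : Ordinal → Ordinal) : Prop where
  isEmbed : IsEmbed ρ Z h
  preserves : ∀ σ ∈ Z, ∀ τ ∈ Z, (le1 σ τ → le1 (h σ) (h τ)) ∧ (le2 σ τ → le2 (h σ) (h τ))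

lemma isCovering_iff {Z Y : Set Ordinal} :
    IsCovering ρ le1 le2 Z Y ↔ ∃ h, IsCoveringEmbed ρ le1 le2 Z h ∧ h '' Z = Y :=
  ⟨fun ⟨h, emb, pres, img⟩ => ⟨h, ⟨emb, pres⟩, img⟩,
    fun ⟨h, ⟨emb, pres⟩, img⟩ => ⟨h, emb, pres, img⟩⟩

lemma isCoveringEmbed_id {Z : Set Ordinal} : IsCoveringEmbed ρ le1 le2 Z id :=
  ⟨⟨fun _ _ _ _ h => h, fun _ _ _ _ _ _ => Iff.rfl⟩, fun _ _ _ _ => ⟨id, id⟩⟩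

namespace IsCoveringEmbed

variable {Z Z' : Set Ordinal} {g h : Ordinal → Ordinal}

lemma strictMonoOn (hh : IsCoveringEmbed ρ le1 le2 Z h) : StrictMonoOn h Z :=
  fun _ hα _ hβ => hh.isEmbed.1 _ hα _ hβ

lemma mono (hh : IsCoveringEmbed ρ le1 le2 Z' h) (hZ : Z ⊆ Z') : IsCoveringEmbed ρ le1 le2 Z h :=
  ⟨⟨fun α hα β hβ => hh.isEmbed.1 α (hZ hα) β (hZ hβ),
    fun α hα β hβ => hh.isEmbed.2 α (hZ hα) β (hZ hβ)⟩,
    fun σ hσ τ hτ => hh.preserves σ (hZ hσ) τ (hZ hτ)⟩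

lemma comp (hg : IsCoveringEmbed ρ le1 le2 Z' g) (hh : IsCoveringEmbed ρ le1 le2 Z h)
    (hmaps : MapsTo h Z Z') : IsCoveringEmbed ρ le1 le2 Z (g ∘ h) := by
  refine ⟨⟨fun α hα β hβ hαβ => ?_, fun α hα β hβ ξ hξ => ?_⟩, fun σ hσ τ hτ => ?_⟩
  · exact hg.isEmbed.1 _ (hmaps hα) _ (hmaps hβ) (hh.isEmbed.1 α hα β hβ hαβ)
  · exact (hh.isEmbed.2 α hα β hβ ξ hξ).trans (hg.isEmbed.2 _ (hmaps hα) _ (hmaps hβ) ξ hξ)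
  · have hgστ := hg.preserves _ (hmaps hσ) _ (hmaps hτ)
    have hhστ := hh.preserves σ hσ τ hτ
    exact ⟨hgστ.1 ∘ hhστ.1, hgστ.2 ∘ hhστ.2⟩

end IsCoveringEmbed

end CoveringMap

section SortedEnumeration

variable {X Y Yt : Finset Ordinal} {h : Ordinal → Ordinal}

lemma sort_image_of_strictMonoOn (hh : StrictMonoOn h (↑X : Set Ordinal)) :
    (X.image h).sort = X.sort.map h := by
  refine List.SortedLT.eq_of_mem_iff (Finset.sortedLT_sort _) ?_ (by simp)
  refine List.sortedLT_iff_pairwise.2 (List.pairwise_map.2 ?_)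
  exact (Finset.sortedLT_sort X).pairwise.imp_of_mem fun ha hb hab =>
    hh (Finset.mem_sort _ |>.1 ha) (Finset.mem_sort _ |>.1 hb) hab

lemma sort_union_of_lt (hXY : ∀ x ∈ X, ∀ y ∈ Y, x < y) : (X ∪ Y).sort = X.sort ++ Y.sort := by
  refine List.SortedLT.eq_of_mem_iff (Finset.sortedLT_sort _) ?_ (by simp)
  refine List.sortedLT_iff_pairwise.2 (List.pairwise_append.2 ⟨?_, ?_, ?_⟩)
  · exact (Finset.sortedLT_sort X).pairwise
  · exact (Finset.sortedLT_sort Y).pairwise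
  · exact fun a ha b hb => hXY a (Finset.mem_sort _ |>.1 ha) b (Finset.mem_sort _ |>.1 hb)

lemma map_sort_of_image_union (hh : StrictMonoOn h (↑(X ∪ Y) : Set Ordinal))
    (himg : h '' ↑(X ∪ Y) = ↑(X ∪ Yt)) (hXY : ∀ x ∈ X, ∀ y ∈ Y, x < y)
    (hXYt : ∀ x ∈ X, ∀ y ∈ Yt, x < y) :
    X.sort.map h = X.sort ∧ Y.sort.map h = Yt.sort := by
  have key : (X ∪ Y).sort.map h = (X ∪ Yt).sort := by
    rw [← sort_image_of_strictMonoOn hh]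
    congr 1
    exact Finset.coe_injective (by rw [Finset.coe_image, himg])
  rw [sort_union_of_lt hXY, sort_union_of_lt hXYt, List.map_append] at key
  exact List.append_inj key (List.length_map _)

lemma eq_self_of_image_union (hh : StrictMonoOn h (↑(X ∪ Y) : Set Ordinal))
    (himg : h '' ↑(X ∪ Y) = ↑(X ∪ Yt)) (hXY : ∀ x ∈ X, ∀ y ∈ Y, x < y)
    (hXYt : ∀ x ∈ X, ∀ y ∈ Yt, x < y) {x : Ordinal} (hx : x ∈ X) : h x = x := by
  have hX := (map_sort_of_image_union hh himg hXY hXYt).1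
  exact List.map_inj_left.1 (hX.trans (List.map_id _).symm) x ((Finset.mem_sort _).2 hx)

lemma image_eq_of_image_union (hh : StrictMonoOn h (↑(X ∪ Y) : Set Ordinal))
    (himg : h '' ↑(X ∪ Y) = ↑(X ∪ Yt)) (hXY : ∀ x ∈ X, ∀ y ∈ Y, x < y)
    (hXYt : ∀ x ∈ X, ∀ y ∈ Yt, x < y) : h '' ↑Y = ↑Yt := by
  have hY := (map_sort_of_image_union hh himg hXY hXYt).2
  ext z
  simpa using congrArg (z ∈ ·) hY

lemma nth_of_image_union (hh : StrictMonoOn h (↑(X ∪ Y) : Set Ordinal))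
    (himg : h '' ↑(X ∪ Y) = ↑(X ∪ Yt)) (hXY : ∀ x ∈ X, ∀ y ∈ Y, x < y)
    (hXYt : ∀ x ∈ X, ∀ y ∈ Yt, x < y) {i : ℕ} (hi : i < Y.card) :
    h (nth Y i) = nth Yt i := by
  have hY := (map_sort_of_image_union hh himg hXY hXYt).2
  have hi' : i < Yt.sort.length := by rw [← hY, List.length_map, Finset.length_sort]; exact hi
  unfold nth
  rw [List.getD_eq_getElem _ _ (by rwa [Finset.length_sort]), List.getD_eq_getElem _ _ hi']
  simp only [← hY, List.getElem_map]

lemma nth_mem {i : ℕ} (hi : i < Y.card) : nth Y i ∈ Y := by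
  unfold nth
  rw [List.getD_eq_getElem _ _ (by rwa [Finset.length_sort])]
  exact (Finset.mem_sort _).1 (List.getElem_mem _)

lemma exists_nth_eq {y : Ordinal} (hy : y ∈ Y) : ∃ i < Y.card, nth Y i = y := by
  obtain ⟨i, hi, rfl⟩ := List.mem_iff_getElem.1 ((Finset.mem_sort (· ≤ ·)).2 hy)
  refine ⟨i, by rwa [Finset.length_sort] at hi, ?_⟩
  unfold nth
  rw [List.getD_eq_getElem _ _ hi]

end SortedEnumeration

section Descent

variable {ρ : Ordinal} {le1 le2 T : Ordinal → Ordinal → Prop}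

structure DescendsVia (ρ : Ordinal) (le1 le2 T : Ordinal → Ordinal → Prop) (α β : Ordinal)
    (X Y Yt : Finset Ordinal) (h : Ordinal → Ordinal) : Prop where
  below : ∀ y ∈ Yt, y < α
  above : ∀ x ∈ X, ∀ y ∈ Yt, x < y
  isCoveringEmbed : IsCoveringEmbed ρ le1 le2 ↑(X ∪ Y) h
  image_union : h '' ↑(X ∪ Y) = ↑(X ∪ Yt)
  transfer : ∀ y ∈ Y, T y β → T (h y) α

/-- The common core of `≤₁` (with `T` trivial) and of clause (ii) of `≤₂` (with `T = ≤₁`, the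
`i`-th elements of `Y` and `Ỹ` being matched by the covering map). The paper only asks for
`Y ⊆ [α, β)`; allowing any `Y` above `X` lets two descents be composed directly, and
`descent_of_forall_Ico` shows that this changes nothing. -/
def Descent (ρ : Ordinal) (le1 le2 T : Ordinal → Ordinal → Prop) (α β : Ordinal) : Prop :=
  ∀ X Y : Finset Ordinal, (∀ x ∈ X, x < α) → (∀ x ∈ X, ∀ y ∈ Y, x < y) → (∀ y ∈ Y, y < β) →
    RClosed ρ ↑(X ∪ Y) → ∃ Yt h, DescendsVia ρ le1 le2 T α β X Y Yt h

namespace DescendsVia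

variable {α β γ : Ordinal} {X Y Yt Yt' : Finset Ordinal} {g h : Ordinal → Ordinal}

lemma eq_self (hd : DescendsVia ρ le1 le2 T α β X Y Yt h) (hXY : ∀ x ∈ X, ∀ y ∈ Y, x < y)
    {x : Ordinal} (hx : x ∈ X) : h x = x :=
  eq_self_of_image_union hd.isCoveringEmbed.strictMonoOn hd.image_union hXY hd.above hx

lemma image_eq (hd : DescendsVia ρ le1 le2 T α β X Y Yt h) (hXY : ∀ x ∈ X, ∀ y ∈ Y, x < y) :
    h '' ↑Y = ↑Yt :=
  image_eq_of_image_union hd.isCoveringEmbed.strictMonoOn hd.image_union hXY hd.above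

lemma comp (hd : DescendsVia ρ le1 le2 T β γ X Y Yt h) (hd' : DescendsVia ρ le1 le2 T α β X Yt Yt' g)
    (hXY : ∀ x ∈ X, ∀ y ∈ Y, x < y) : DescendsVia ρ le1 le2 T α γ X Y Yt' (g ∘ h) where
  below := hd'.below
  above := hd'.above
  isCoveringEmbed :=
    hd'.isCoveringEmbed.comp hd.isCoveringEmbed (hd.image_union ▸ mapsTo_image h _)
  image_union := by rw [image_comp, hd.image_union, hd'.image_union]
  transfer y hy hTy := by
    have hhy : h y ∈ (↑Yt : Set Ordinal) := hd.image_eq hXY ▸ mem_image_of_mem h hy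
    exact hd'.transfer (h y) hhy (hd.transfer y hy hTy)

end DescendsVia

namespace Descent

variable {α β γ : Ordinal}

lemma refl : Descent ρ le1 le2 T α α := fun _ Y _ hXY hY _ =>
  ⟨Y, id, ⟨hY, hXY, isCoveringEmbed_id, image_id _, fun _ _ => id⟩⟩

lemma trans (hαβ : α ≤ β) (hab : Descent ρ le1 le2 T α β) (hbc : Descent ρ le1 le2 T β γ) :
    Descent ρ le1 le2 T α γ := by
  intro X Y hX hXY hY hcl
  obtain ⟨Yt, h, hd⟩ := hbc X Y (fun x hx => (hX x hx).trans_le hαβ) hXY hY hcl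
  have hcl' : RClosed ρ ↑(X ∪ Yt) := hd.image_union ▸ hcl.image hd.isCoveringEmbed.isEmbed
  obtain ⟨Yt', g, hd'⟩ := hab X Yt hX hd.above hd.below hcl'
  exact ⟨Yt', g ∘ h, hd.comp hd' hXY⟩

lemma mono_right (hβγ : β ≤ γ) (hT : ∀ y, T y β → T y γ) (hD : Descent ρ le1 le2 T α γ) :
    Descent ρ le1 le2 T α β := by
  intro X Y hX hXY hY hcl
  obtain ⟨Yt, h, hd⟩ := hD X Y hX hXY (fun y hy => (hY y hy).trans_le hβγ) hcl
  exact ⟨Yt, h, hd.below, hd.above, hd.isCoveringEmbed, hd.image_union,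
    fun y hy hTy => hd.transfer y hy (hT y hTy)⟩

lemma forget_transfer (hD : Descent ρ le1 le2 T α β) :
    Descent ρ le1 le2 (fun _ _ => True) α β := by
  intro X Y hX hXY hY hcl
  obtain ⟨Yt, h, hd⟩ := hD X Y hX hXY hY hcl
  exact ⟨Yt, h, hd.below, hd.above, hd.isCoveringEmbed, hd.image_union,
    fun _ _ _ => trivial⟩

end Descent

/-- Elements of `Y` below `α` are left in place, the others descend by hypothesis. -/
lemma descent_of_forall_Ico {α β : Ordinal} (hT : ∀ z < α, T z β → T z α)
    (H : ∀ X Y : Finset Ordinal, (∀ x ∈ X, x < α) → (∀ y ∈ Y, α ≤ y ∧ y < β) →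
      RClosed ρ ↑(X ∪ Y) → ∃ Yt h, DescendsVia ρ le1 le2 T α β X Y Yt h) :
    Descent ρ le1 le2 T α β := by
  classical
  intro X Y hX hXY hY hcl
  set V := Y.filter (· < α)
  set W := Y.filter (¬ · < α)
  have hsplit : X ∪ Y = (X ∪ V) ∪ W := by rw [Finset.union_assoc, Finset.filter_union_filter_not_eq]
  have hXV : ∀ x ∈ X ∪ V, x < α := by
    intro x hx
    rcases Finset.mem_union.1 hx with hx | hx
    · exact hX x hx
    · exact (Finset.mem_filter.1 hx).2
  have hW : ∀ w ∈ W, α ≤ w ∧ w < β := fun w hw =>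
    ⟨not_lt.1 (Finset.mem_filter.1 hw).2, hY w (Finset.mem_filter.1 hw).1⟩
  rw [hsplit] at hcl
  obtain ⟨Yt, h, hd⟩ := H (X ∪ V) W hXV hW hcl
  have hfix : ∀ x ∈ X ∪ V, h x = x := fun _ =>
    hd.eq_self fun x hx w hw => (hXV x hx).trans_le (hW w hw).1
  refine ⟨V ∪ Yt, h, ⟨?_, ?_, hsplit ▸ hd.isCoveringEmbed, ?_, ?_⟩⟩
  · intro y hy
    rcases Finset.mem_union.1 hy with hy | hy
    · exact (Finset.mem_filter.1 hy).2
    · exact hd.below y hy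
  · intro x hx y hy
    rcases Finset.mem_union.1 hy with hy | hy
    · exact hXY x hx y (Finset.mem_filter.1 hy).1
    · exact hd.above x (Finset.mem_union_left _ hx) y hy
  · rw [hsplit, hd.image_union, Finset.union_assoc]
  · intro y hy hTy
    by_cases hyα : y < α
    · rw [hfix y (Finset.mem_union_right _ (Finset.mem_filter.2 ⟨hy, hyα⟩))]
      exact hT y hyα hTy
    · exact hd.transfer y (Finset.mem_filter.2 ⟨hy, hyα⟩) hTy

end Descent

section Transfer

variable {ρ : Ordinal} {le1 le2 T : Ordinal → Ordinal → Prop}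

/-- The point of adjoining the closed pair `{ρ·(δ/ρ), δ}` to `X` is that the descending map then
fixes `δ`, so the new covering stays above `δ`. -/
lemma Descent.exists_covering_between {β γ δ : Ordinal} (hD : Descent ρ le1 le2 T β γ)
    {X Y Ytc : Finset Ordinal} (hXδ : ∀ x ∈ X, x ≤ δ) (hδ : δ < β)
    (hYtc : ∀ y ∈ Ytc, δ < y ∧ y < γ) (hcl : RClosed ρ ↑(X ∪ Y))
    (hcov : IsCovering ρ le1 le2 ↑(X ∪ Y) ↑(X ∪ Ytc)) :
    ∃ Yt : Finset Ordinal, (∀ y ∈ Yt, δ < y ∧ y < β) ∧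
      IsCovering ρ le1 le2 ↑(X ∪ Y) ↑(X ∪ Yt) := by
  classical
  obtain ⟨h, hh, himg⟩ := isCovering_iff.1 hcov
  set X₁ := X ∪ {ρ * (δ / ρ), δ}
  have hX₁ : ∀ x ∈ X₁, x ≤ δ := by
    intro x hx
    simp only [X₁, Finset.mem_union, Finset.mem_insert, Finset.mem_singleton] at hx
    rcases hx with hx | rfl | rfl
    · exact hXδ x hx
    · exact Ordinal.mul_div_le _ _
    · exact le_rfl
  have hX₁Ytc : ∀ x ∈ X₁, ∀ y ∈ Ytc, x < y := fun x hx y hy => (hX₁ x hx).trans_lt (hYtc y hy).1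
  have hcl₁ : RClosed ρ ↑(X₁ ∪ Ytc) := by
    have : (↑(X₁ ∪ Ytc) : Set Ordinal) = ↑(X ∪ Ytc) ∪ {ρ * (δ / ρ), δ} := by
      ext
      simp only [X₁, Finset.coe_union, Finset.coe_insert, Finset.coe_singleton, mem_union,
        mem_insert_iff, mem_singleton_iff, Finset.mem_coe]
      tauto
    rw [this, ← himg]
    exact (hcl.image hh.isEmbed).union (rclosed_pair δ)
  obtain ⟨Yt, g, hd⟩ := hD X₁ Ytc (fun x hx => (hX₁ x hx).trans_lt hδ) hX₁Ytc
    (fun y hy => (hYtc y hy).2) hcl₁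
  have hgX : g '' ↑X = ↑X :=
    EqOn.image_eq_self fun x hx => hd.eq_self hX₁Ytc (Finset.mem_union_left _ hx)
  refine ⟨Yt, fun y hy => ⟨hd.above δ (by simp [X₁]) y hy, hd.below y hy⟩,
    isCovering_iff.2 ⟨g ∘ h, (hd.isCoveringEmbed.mono ?_).comp hh (himg ▸ mapsTo_image h _), ?_⟩⟩
  · exact Finset.coe_subset.2 (Finset.union_subset_union Finset.subset_union_left le_rfl)
  · rw [image_comp, himg, Finset.coe_union, image_union, hd.image_eq hX₁Ytc, hgX,
      Finset.coe_union]

/-- Clause (i) in the definition of `α ≤₂ β`. -/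
def CofinalTransfer (ρ : Ordinal) (le1 le2 : Ordinal → Ordinal → Prop) (α β : Ordinal) : Prop :=
  ∀ X Y : Finset Ordinal, (∀ x ∈ X, x < α) → (∀ y ∈ Y, y < α) →
    RClosed ρ (↑X : Set Ordinal) → RClosed ρ (↑Y : Set Ordinal) →
    (∀ x ∈ X, ∀ y ∈ Y, x < y) →
    Cofinally α (fun Yt => IsCovering ρ le1 le2 (↑(X ∪ Y) : Set Ordinal) (↑(X ∪ Yt) : Set Ordinal)) →
    Cofinally β (fun Yt => IsCovering ρ le1 le2 (↑(X ∪ Y) : Set Ordinal) (↑(X ∪ Yt) : Set Ordinal))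

namespace CofinalTransfer

variable {α β γ : Ordinal}

lemma refl : CofinalTransfer ρ le1 le2 α α := fun _ _ _ _ _ _ _ h => h

lemma trans (hαβ : α ≤ β) (hab : CofinalTransfer ρ le1 le2 α β)
    (hbc : CofinalTransfer ρ le1 le2 β γ) : CofinalTransfer ρ le1 le2 α γ :=
  fun X Y hX hY hclX hclY hXY hcof => hbc X Y (fun x hx => (hX x hx).trans_le hαβ)
    (fun y hy => (hY y hy).trans_le hαβ) hclX hclY hXY (hab X Y hX hY hclX hclY hXY hcof)

lemma of_descent (hαβ : α ≤ β) (hβγ : β ≤ γ) (hD : Descent ρ le1 le2 T β γ)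
    (hαγ : CofinalTransfer ρ le1 le2 α γ) : CofinalTransfer ρ le1 le2 α β := by
  classical
  intro X Y hX hY hclX hclY hXY hcof β' hβ'
  set δ := (insert β' X).max' (Finset.insert_nonempty _ _)
  have hδβ : δ < β := by
    simpa [δ, Finset.max'_lt_iff, hβ'] using fun x hx => (hX x hx).trans_le hαβ
  obtain ⟨Ytc, hYtc, hcov⟩ := hαγ X Y hX hY hclX hclY hXY hcof δ (hδβ.trans_le hβγ)
  obtain ⟨Yt, hYt, hcov'⟩ := hD.exists_covering_between
    (fun x hx => Finset.le_max' _ x (Finset.mem_insert_of_mem hx)) hδβ hYtc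
    (Finset.coe_union X Y ▸ hclX.union hclY) hcov
  have hβ'δ : β' ≤ δ := Finset.le_max' _ β' (Finset.mem_insert_self _ _)
  exact ⟨Yt, fun y hy => ⟨hβ'δ.trans_lt (hYt y hy).1, (hYt y hy).2⟩, hcov'⟩

end CofinalTransfer

end Transfer

section Relations

variable {ρ : Ordinal} {le1 le2 : Ordinal → Ordinal → Prop} {α β γ : Ordinal}

lemma le1_iff_descent (hsys : R2System ρ le1 le2) :
    le1 α β ↔ α ≤ β ∧ Descent ρ le1 le2 (fun _ _ => True) α β := by
  rw [hsys.1, Le1Def]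
  refine and_congr_right fun _ => ⟨fun H => ?_, fun hD X Y hX hY hcl => ?_⟩
  · refine descent_of_forall_Ico (fun _ _ _ => trivial) fun X Y hX hY hcl => ?_
    obtain ⟨Yt, hYt, hXYt, hcov⟩ := H X Y hX hY hcl
    obtain ⟨h, hh, himg⟩ := isCovering_iff.1 hcov
    exact ⟨Yt, h, hYt, hXYt, hh, himg, fun _ _ _ => trivial⟩
  · obtain ⟨Yt, h, hd⟩ := hD X Y hX (fun x hx y hy => (hX x hx).trans_le (hY y hy).1)
      (fun y hy => (hY y hy).2) hcl
    exact ⟨Yt, hd.below, hd.above, isCovering_iff.2 ⟨h, hd.isCoveringEmbed, hd.image_union⟩⟩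

lemma le_of_le1 (hsys : R2System ρ le1 le2) (h : le1 α β) : α ≤ β :=
  ((le1_iff_descent hsys).1 h).1

lemma le1_refl (hsys : R2System ρ le1 le2) (α : Ordinal) : le1 α α :=
  (le1_iff_descent hsys).2 ⟨le_rfl, Descent.refl⟩

lemma le1_trans (hsys : R2System ρ le1 le2) (hab : le1 α β) (hbc : le1 β γ) : le1 α γ := by
  obtain ⟨hαβ, hDab⟩ := (le1_iff_descent hsys).1 hab
  obtain ⟨hβγ, hDbc⟩ := (le1_iff_descent hsys).1 hbc
  exact (le1_iff_descent hsys).2 ⟨hαβ.trans hβγ, hDab.trans hαβ hDbc⟩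

lemma le1_of_le1_of_le (hsys : R2System ρ le1 le2) (hαβ : α ≤ β) (hβγ : β ≤ γ)
    (h : le1 α γ) : le1 α β := by
  obtain ⟨-, hD⟩ := (le1_iff_descent hsys).1 h
  exact (le1_iff_descent hsys).2 ⟨hαβ, hD.mono_right hβγ fun _ _ => trivial⟩

lemma le2_iff_descent (hsys : R2System ρ le1 le2) :
    le2 α β ↔ α ≤ β ∧ CofinalTransfer ρ le1 le2 α β ∧ Descent ρ le1 le2 le1 α β := by
  rw [hsys.2, Le2Def]
  refine and_congr_right fun hαβ => and_congr_right fun _ => ⟨fun H => ?_, fun hD X Y hX hY hcl => ?_⟩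
  · refine descent_of_forall_Ico (fun z hz h => le1_of_le1_of_le hsys hz.le hαβ h)
      fun X Y hX hY hcl => ?_
    obtain ⟨Yt, hYt, hXYt, hcov, hnth⟩ := H X Y hX hY hcl
    obtain ⟨h, hh, himg⟩ := isCovering_iff.1 hcov
    have hXY : ∀ x ∈ X, ∀ y ∈ Y, x < y := fun x hx y hy => (hX x hx).trans_le (hY y hy).1
    refine ⟨Yt, h, hYt, hXYt, hh, himg, fun y hy hle => ?_⟩
    obtain ⟨i, hi, rfl⟩ := exists_nth_eq hy
    rw [nth_of_image_union hh.strictMonoOn himg hXY hXYt hi]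
    exact hnth i hi hle
  · have hXY : ∀ x ∈ X, ∀ y ∈ Y, x < y := fun x hx y hy => (hX x hx).trans_le (hY y hy).1
    obtain ⟨Yt, h, hd⟩ := hD X Y hX hXY (fun y hy => (hY y hy).2) hcl
    refine ⟨Yt, hd.below, hd.above,
      isCovering_iff.2 ⟨h, hd.isCoveringEmbed, hd.image_union⟩, fun i hi hle => ?_⟩
    rw [← nth_of_image_union hd.isCoveringEmbed.strictMonoOn hd.image_union hXY hd.above hi]
    exact hd.transfer _ (nth_mem hi) hle

lemma le1_of_le2 (hsys : R2System ρ le1 le2) (h : le2 α β) : le1 α β := by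
  obtain ⟨hαβ, -, hD⟩ := (le2_iff_descent hsys).1 h
  exact (le1_iff_descent hsys).2 ⟨hαβ, hD.forget_transfer⟩

lemma le2_refl (hsys : R2System ρ le1 le2) (α : Ordinal) : le2 α α :=
  (le2_iff_descent hsys).2 ⟨le_rfl, CofinalTransfer.refl, Descent.refl⟩

lemma le2_trans (hsys : R2System ρ le1 le2) (hab : le2 α β) (hbc : le2 β γ) : le2 α γ := by
  obtain ⟨hαβ, hCab, hDab⟩ := (le2_iff_descent hsys).1 hab
  obtain ⟨hβγ, hCbc, hDbc⟩ := (le2_iff_descent hsys).1 hbc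
  exact (le2_iff_descent hsys).2 ⟨hαβ.trans hβγ, hCab.trans hαβ hCbc, hDab.trans hαβ hDbc⟩

lemma le2_of_le1_of_le2 (hsys : R2System ρ le1 le2) (hab : le1 α β) (hbc : le1 β γ)
    (h : le2 α γ) : le2 α β := by
  obtain ⟨hαβ, -⟩ := (le1_iff_descent hsys).1 hab
  obtain ⟨hβγ, hDbc⟩ := (le1_iff_descent hsys).1 hbc
  obtain ⟨-, hC, hD⟩ := (le2_iff_descent hsys).1 h
  exact (le2_iff_descent hsys).2 ⟨hαβ, hC.of_descent hαβ hβγ hDbc,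
    hD.mono_right hβγ fun _ hy => le1_trans hsys hy hbc⟩

end Relations

theorem partial_orders_and_respect_general
    (ρ : Ordinal)
    (le1 le2 : Ordinal → Ordinal → Prop) (hsys : R2System ρ le1 le2)
    :
    (∀ a : Ordinal, le1 a a) ∧
    (∀ a b : Ordinal, le1 a b → le1 b a → a = b) ∧
    (∀ a b c : Ordinal, le1 a b → le1 b c → le1 a c) ∧
    (∀ a : Ordinal, le2 a a) ∧
    (∀ a b : Ordinal, le2 a b → le2 b a → a = b) ∧
    (∀ a b c : Ordinal, le2 a b → le2 b c → le2 a c) ∧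
    (∀ a b : Ordinal, le1 a b → a ≤ b) ∧
    (∀ a b c : Ordinal, a ≤ b → b ≤ c → le1 a c → le1 a b) ∧
    (∀ a b : Ordinal, le2 a b → le1 a b) ∧
    (∀ a b c : Ordinal, le1 a b → le1 b c → le2 a c → le2 a b) := by
  have le_of_le2 {a b : Ordinal} (h : le2 a b) : a ≤ b := le_of_le1 hsys (le1_of_le2 hsys h)
  exact ⟨le1_refl hsys,
    fun _ _ hab hba => (le_of_le1 hsys hab).antisymm (le_of_le1 hsys hba),
    fun _ _ _ => le1_trans hsys,
    le2_refl hsys,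
    fun _ _ hab hba => (le_of_le2 hab).antisymm (le_of_le2 hba),
    fun _ _ _ => le2_trans hsys,
    fun _ _ => le_of_le1 hsys,
    fun _ _ _ => le1_of_le1_of_le hsys,
    fun _ _ => le1_of_le2 hsys,
    fun _ _ _ => le2_of_le1_of_le2 hsys⟩

theorem partial_orders_and_respect
    (ρ : Ordinal) (hρ : AddIndec ρ)
    (le1 le2 : Ordinal → Ordinal → Prop) (hsys : R2System ρ le1 le2)
    :
    (∀ a : Ordinal, le1 a a) ∧
    (∀ a b : Ordinal, le1 a b → le1 b a → a = b) ∧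
    (∀ a b c : Ordinal, le1 a b → le1 b c → le1 a c) ∧
    (∀ a : Ordinal, le2 a a) ∧
    (∀ a b : Ordinal, le2 a b → le2 b a → a = b) ∧
    (∀ a b c : Ordinal, le2 a b → le2 b c → le2 a c) ∧
    (∀ a b : Ordinal, le1 a b → a ≤ b) ∧
    (∀ a b c : Ordinal, a ≤ b → b ≤ c → le1 a c → le1 a b) ∧
    (∀ a b : Ordinal, le2 a b → le1 a b) ∧
    (∀ a b c : Ordinal, le1 a b → le1 b c → le2 a c → le2 a b) :=
  partial_orders_and_respect_general ρ le1 le2 hsys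
end

section
/- If α <₁ β (that is, α ≤₁ β and α ≠ β), then α is a limit multiple of ρ, i.e. α = ρ·λ for some limit ordinal λ. -/
open Ordinal Set

/-!
If `α <₁ β` then `α ≠ 0`, since a covering of `{0}` would have to lie below `0`. Otherwise, unless
`α = ρ·λ` with `λ` a limit, some multiple `μ = ρ·η` satisfies `μ < α ≤ μ + ρ`, and `{μ, α}` is
closed. A covering of it by `{μ} ∪ Ỹ` with `μ < Ỹ < α` fixes `μ` and sends `α` to some `μ + ξ < α`
with `ξ < ρ`. As `f_ξ(μ) = μ + ξ`, the embedding condition then forces `f_ξ(μ) = α`, which is absurd.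
-/

lemma DivBy.eq_mul_add_div {ρ σ ξ : Ordinal} (hρ : ρ ≠ 0) (hσ : DivBy ρ σ) (hξ : ξ < ρ) :
    σ = ρ * ((σ + ξ) / ρ) := by
  obtain ⟨ζ, rfl⟩ := hσ
  rw [Ordinal.mul_add_div _ hρ, Ordinal.div_eq_zero_of_lt hξ, add_zero]

lemma RClosed.of_mul_div_mem {ρ : Ordinal} {X : Set Ordinal} (hρ : ρ ≠ 0)
    (hX : ∀ x ∈ X, ρ * (x / ρ) ∈ X) : RClosed ρ X := by
  intro σ ξ hσ hξ hmem
  rw [hσ.eq_mul_add_div hρ hξ]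
  exact hX _ hmem

lemma fApp_mul (ρ ξ η : Ordinal) : fApp ρ ξ (ρ * η) = ρ * η + ξ := by
  rw [fApp, if_pos (Ordinal.mul_mod ρ η)]

lemma mul_div_eq_or_eq_of_mem_Ioc {ρ η α : Ordinal} (hρ : ρ ≠ 0)
    (hα : α ∈ Ioc (ρ * η) (ρ * η + ρ)) : ρ * (α / ρ) = ρ * η ∨ ρ * (α / ρ) = α := by
  rcases hα.2.lt_or_eq with hlt | rfl
  · left
    obtain ⟨ξ, rfl⟩ := le_iff_exists_add.1 hα.1.le
    rw [Ordinal.mul_add_div _ hρ, Ordinal.div_eq_zero_of_lt ((add_lt_add_iff_left _).1 hlt),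
      add_zero]
  · right
    rw [← Ordinal.mul_succ, Ordinal.mul_div_cancel _ hρ]

lemma apply_eq_and_mem_Ioo_of_image_pair {h : Ordinal → Ordinal} {μ α : Ordinal}
    {Yt : Set Ordinal} (hYt : Yt ⊆ Ioo μ α) (hmono : h μ < h α)
    (himg : h '' {μ, α} = insert μ Yt) : h μ = μ ∧ h α ∈ Ioo μ α := by
  have hge : ∀ y ∈ insert μ Yt, μ ≤ y := by
    rintro y (rfl | hy)
    exacts [le_rfl, (hYt hy).1.le]
  have hμα : μ < h α := (hge _ (himg ▸ mem_image_of_mem h (by simp))).trans_lt hmono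
  have hαY : h α ∈ insert μ Yt := himg ▸ mem_image_of_mem h (by simp)
  obtain ⟨z, hz, hzμ⟩ : μ ∈ h '' {μ, α} := himg ▸ mem_insert μ Yt
  rcases hz with rfl | rfl
  · refine ⟨hzμ, hμα, ?_⟩
    rcases hαY with heq | hy
    exacts [absurd heq hμα.ne', (hYt hy).2]
  · exact absurd hzμ hμα.ne'

theorem not_le1Def_zero {ρ β : Ordinal} {le1 le2 : Ordinal → Ordinal → Prop} (hβ : 0 < β) :
    ¬ Le1Def ρ le1 le2 0 β := by
  rintro ⟨-, hcov⟩
  have hclosed : RClosed ρ (↑((∅ : Finset Ordinal) ∪ {0}) : Set Ordinal) := by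
    intro σ ξ _ _ hmem
    simp only [Finset.empty_union, Finset.coe_singleton, mem_singleton_iff] at hmem ⊢
    exact nonpos_iff_eq_zero.1 (hmem ▸ le_self_add)
  obtain ⟨Yt, hYt, -, h, -, -, himg⟩ := hcov ∅ {0} (by simp) (by simpa using hβ) hclosed
  have : h 0 ∈ (↑((∅ : Finset Ordinal) ∪ Yt) : Set Ordinal) := himg ▸ mem_image_of_mem h (by simp)
  simp only [Finset.empty_union, Finset.mem_coe] at this
  exact (hYt _ this).not_ge zero_le

theorem not_le1Def_of_mem_Ioc {ρ η α β : Ordinal} {le1 le2 : Ordinal → Ordinal → Prop}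
    (hρ : ρ ≠ 0) (hα : α ∈ Ioc (ρ * η) (ρ * η + ρ)) (hαβ : α < β) :
    ¬ Le1Def ρ le1 le2 α β := by
  rintro ⟨-, hcov⟩
  set μ := ρ * η
  have hclosed : RClosed ρ (↑(({μ} : Finset Ordinal) ∪ {α}) : Set Ordinal) := by
    refine RClosed.of_mul_div_mem hρ ?_
    simp only [Finset.coe_union, Finset.coe_singleton, mem_union, mem_singleton_iff]
    rintro x (rfl | rfl)
    · left; rw [Ordinal.mul_div_cancel _ hρ]
    · exact mul_div_eq_or_eq_of_mem_Ioc hρ hα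
  obtain ⟨Yt, hYtα, hμYt, h, hemb, -, himg⟩ :=
    hcov {μ} {α} (by simpa using hα.1) (by simpa using hαβ) hclosed
  have hZ : (↑(({μ} : Finset Ordinal) ∪ {α}) : Set Ordinal) = {μ, α} := by simp
  rw [hZ] at hemb himg
  obtain ⟨hhμ, hμ_lt, hlt_α⟩ := apply_eq_and_mem_Ioo_of_image_pair (Yt := ↑Yt)
    (fun y hy => ⟨by simpa using hμYt μ (by simp) y hy, hYtα y hy⟩)
    (hemb.1 μ (by simp) α (by simp) hα.1) (by simpa using himg)
  obtain ⟨ξ, hξ⟩ := le_iff_exists_add.1 hμ_lt.le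
  have hξρ : ξ < ρ := (add_lt_add_iff_left μ).1 (hξ ▸ hlt_α.trans_le hα.2)
  have hfα : fApp ρ ξ μ = α :=
    (hemb.2 μ (by simp) α (by simp) ξ hξρ).2 (by rw [hhμ, fApp_mul, hξ])
  rw [fApp_mul, ← hξ] at hfα
  exact hlt_α.ne hfα

theorem lt1_limit_multiple
    (ρ : Ordinal) (hρ : AddIndec ρ)
    (le1 le2 : Ordinal → Ordinal → Prop) (hsys : R2System ρ le1 le2)
    (α β : Ordinal) (h : le1 α β) (hne : α ≠ β) :
    ∃ l : Ordinal, α = ρ * l ∧ Order.IsSuccLimit l := by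
  have hdef := (hsys.1 α β).1 h
  have hαβ : α < β := hdef.1.lt_of_ne hne
  have hdm := Ordinal.div_add_mod α ρ
  by_cases hmod : α % ρ = 0
  · rw [hmod, add_zero] at hdm
    rcases Ordinal.zero_or_succ_or_isSuccLimit (α / ρ) with hz | ⟨η, hη⟩ | hlim
    · rw [hz, mul_zero] at hdm
      exact absurd (hdm ▸ hdef) (not_le1Def_zero (hdm ▸ hαβ))
    · have hα : α = ρ * η + ρ := by rw [← hdm, ← hη, Ordinal.mul_succ]
      refine absurd hdef (not_le1Def_of_mem_Ioc hρ.1 ⟨?_, hα.le⟩ hαβ)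
      exact hα ▸ lt_add_of_pos_right _ (pos_iff_ne_zero.2 hρ.1)
    · exact ⟨α / ρ, hdm.symm, hlim⟩
  · refine absurd hdef (not_le1Def_of_mem_Ioc (η := α / ρ) hρ.1 ⟨?_, ?_⟩ hαβ)
    · exact (lt_add_of_pos_right _ (pos_iff_ne_zero.2 hmod)).trans_eq hdm
    · exact hdm.symm.le.trans (add_le_add le_rfl (Ordinal.mod_lt α hρ.1).le)
end
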